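/- Let φ ∈ X (continuous, nonpositive, vanishing at infinity, m(φ) = inf (1+|x|)|φ(x)| > 0). Then the Jacobian a_φ is C¹ on (-∞,0) with derivative a_φ'(e) = 4π√2 ∫_{ℝ³}(e-φ(x))₊^{1/2} dx, and a_φ is a strictly increasing C¹ diffeomorphism from [min φ, 0) onto [0,+∞); in particular a_φ(e) → +∞ as e → 0⁻. -/

import Mathlib

open MeasureTheory Real Filter Set

noncomputable section

abbrev R3 := EuclideanSpace ℝ (Fin 3)

def mX (φ : R3 → ℝ) : ℝ := ⨅ x : R3, (1 + ‖x‖) * |φ x|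

def memX (φ : R3 → ℝ) : Prop :=
  Continuous φ ∧ (∀ x, φ x ≤ 0) ∧ Tendsto φ (cocompact R3) (nhds 0) ∧
    Integrable (fun x => ‖fderiv ℝ φ x‖ ^ 2) ∧ 0 < mX φ

/-- The Jacobian `a_φ(e) = (8π√2/3)∫ (e-φ(x))₊^{3/2} dx`. -/
def aphi (φ : R3 → ℝ) (e : ℝ) : ℝ :=
  (8 * π * Real.sqrt 2 / 3) * ∫ x : R3, (max (e - φ x) 0) ^ ((3 : ℝ) / 2)


/-! For `e < 0` the integrand `(e - φ)₊ ^ (3/2)` is continuous and vanishes off the compact set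
`{φ ≤ e}`, so it can be differentiated under the integral sign, with the integrand at level `e / 2`
as dominating function; the derivative `(3/2) ∫ (e - φ)₊ ^ (1/2)` is continuous by dominated
convergence. On the open set `{φ < e₂} ∋ x₀` the integrand at level `e₂` strictly exceeds the one at
any lower level, which gives strict monotonicity. The decay bound `φ x ≤ -m(φ) / (1 + ‖x‖)` gives
`e - φ ≥ |e|` on a ball of radius `m(φ) / (4|e|)`, so `a_φ(e) ≳ |e| ^ (3/2 - 3) → ∞` as `e → 0⁻`;
the intermediate value theorem then yields the image `[0, ∞)`. -/

open Topology Metric Module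

lemma monotone_max_zero_rpow {p : ℝ} (hp : 0 ≤ p) : Monotone fun t : ℝ => max t 0 ^ p :=
  fun _ _ hst => rpow_le_rpow (le_max_right _ _) (max_le_max hst le_rfl) hp

lemma hasDerivAt_max_zero_rpow {p : ℝ} (hp : 1 < p) (t : ℝ) :
    HasDerivAt (fun s : ℝ => max s 0 ^ p) (p * max t 0 ^ (p - 1)) t := by
  have hzero : ∀ s ≤ (0 : ℝ), max s 0 ^ p = 0 := fun s hs => by
    rw [max_eq_right hs, zero_rpow (by linarith)]
  rcases lt_trichotomy t 0 with ht | rfl | ht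
  · rw [max_eq_right ht.le, zero_rpow (by linarith), mul_zero]
    refine (hasDerivAt_const t 0).congr_of_eventuallyEq ?_
    filter_upwards [Iic_mem_nhds ht] with s hs using hzero s hs
  · rw [max_self, zero_rpow (by linarith), mul_zero, ← hasDerivWithinAt_univ, ← Iic_union_Ici]
    refine ((hasDerivWithinAt_const 0 _ 0).congr (fun s hs => hzero s hs) (hzero 0 le_rfl)).union ?_
    have hrpow := (hasDerivAt_rpow_const (x := 0) (Or.inr hp.le)).hasDerivWithinAt (s := Ici 0)
    rw [zero_rpow (by linarith), mul_zero] at hrpow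
    exact hrpow.congr (fun s hs => by rw [max_eq_left hs]) (by rw [max_self])
  · rw [max_eq_left ht.le]
    refine (hasDerivAt_rpow_const (Or.inl ht.ne')).congr_of_eventuallyEq ?_
    filter_upwards [Ioi_mem_nhds ht] with s hs using by rw [max_eq_left hs.le]

lemma contDiffOn_one_of_hasDerivAt {f f' : ℝ → ℝ} {s : Set ℝ} (hs : IsOpen s)
    (hf : ∀ x ∈ s, HasDerivAt f (f' x) x) (hf' : ContinuousOn f' s) : ContDiffOn ℝ 1 f s := by
  refine (contDiffOn_one_iff_derivWithin hs.uniqueDiffOn).2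
    ⟨fun x hx => (hf x hx).differentiableAt.differentiableWithinAt, hf'.congr fun x hx => ?_⟩
  rw [derivWithin_of_isOpen hs hx, (hf x hx).deriv]

lemma image_Ico_eq_Ici_of_tendsto {α β : Type*} [ConditionallyCompleteLinearOrder α]
    [TopologicalSpace α] [OrderTopology α] [DenselyOrdered α]
    [LinearOrder β] [TopologicalSpace β] [OrderClosedTopology β]
    {f : α → β} {a b : α} (hab : a < b) (hf : ContinuousOn f (Ico a b))
    (hmono : MonotoneOn f (Ico a b)) (htop : Tendsto f (𝓝[<] b) atTop) :
    f '' Ico a b = Ici (f a) := by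
  have := right_nhdsWithin_Ico_neBot hab
  refine (image_subset_iff.2 fun x hx => hmono (left_mem_Ico.2 hab) hx hx.1).antisymm ?_
  exact isPreconnected_Ico.intermediate_value_Ici (l := 𝓝[Ico a b] b) (left_mem_Ico.2 hab)
    inf_le_right hf (htop.mono_left (nhdsWithin_mono _ Ico_subset_Iio_self))

lemma isCompact_setOf_le_of_tendsto_cocompact {E : Type*} [TopologicalSpace E] {φ : E → ℝ}
    (hc : Continuous φ) (htend : Tendsto φ (cocompact E) (𝓝 0)) {c : ℝ} (hc0 : c < 0) :
    IsCompact {x | φ x ≤ c} := by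
  obtain ⟨K, hK, hKc⟩ := mem_cocompact.1 (htend (Ioi_mem_nhds hc0))
  refine hK.of_isClosed_subset (isClosed_le hc continuous_const) fun x hx => ?_
  by_contra hxK
  exact (show c < φ x from hKc hxK).not_ge hx

section WellIntegral

variable {E : Type*} [MeasurableSpace E] (μ : Measure E) {φ : E → ℝ}

-- `(e - φ x)₊` is the depth at `x` of the potential well `{φ < e}`.
def wellIntegral (φ : E → ℝ) (p e : ℝ) : ℝ := ∫ x, max (e - φ x) 0 ^ p ∂μ

lemma wellIntegral_eq_zero {p e : ℝ} (hp : 0 < p) (he : ∀ x, e ≤ φ x) :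
    wellIntegral μ φ p e = 0 := by
  simp only [wellIntegral, max_eq_right (sub_nonpos.2 (he _)), zero_rpow hp.ne', integral_zero]

lemma rpow_mul_measureReal_le_wellIntegral {s : Set E} (hs : MeasurableSet s) (hμs : μ s ≠ ⊤)
    {p e t : ℝ} (hp : 0 ≤ p) (ht : 0 ≤ t) (hst : ∀ x ∈ s, φ x ≤ e - t)
    (hint : Integrable (fun x => max (e - φ x) 0 ^ p) μ) :
    t ^ p * μ.real s ≤ wellIntegral μ φ p e :=
  calc t ^ p * μ.real s ≤ ∫ x in s, max (e - φ x) 0 ^ p ∂μ :=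
        setIntegral_ge_of_const_le_real hs hμs (fun x hx =>
          rpow_le_rpow ht (le_max_of_le_left (by linarith [hst x hx])) hp) hint.integrableOn
    _ ≤ wellIntegral μ φ p e :=
        setIntegral_le_integral hint (ae_of_all _ fun _ => rpow_nonneg (le_max_right _ _) _)

variable [TopologicalSpace E]

lemma integrable_max_sub_rpow [OpensMeasurableSpace E] [IsFiniteMeasureOnCompacts μ]
    (hc : Continuous φ) (htend : Tendsto φ (cocompact E) (𝓝 0)) {p e : ℝ} (hp : 0 < p)
    (he : e < 0) : Integrable (fun x => max (e - φ x) 0 ^ p) μ := by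
  refine Continuous.integrable_of_hasCompactSupport (by fun_prop (disch := positivity)) ?_
  refine HasCompactSupport.intro' (isCompact_setOf_le_of_tendsto_cocompact hc htend he)
    (isClosed_le hc continuous_const) fun x hx => ?_
  rw [max_eq_right (by linarith [(not_le.1 hx : e < φ x)]), zero_rpow hp.ne']

lemma hasDerivAt_wellIntegral [OpensMeasurableSpace E] [IsFiniteMeasureOnCompacts μ]
    (hc : Continuous φ) (htend : Tendsto φ (cocompact E) (𝓝 0)) {p e : ℝ} (hp : 1 < p)
    (he : e < 0) : HasDerivAt (wellIntegral μ φ p) (p * wellIntegral μ φ (p - 1) e) e := by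
  have hcont : ∀ q ≥ (0 : ℝ), ∀ e', Continuous fun x => max (e' - φ x) 0 ^ q := fun q hq e' => by
    fun_prop (disch := assumption)
  have hderiv := hasDerivAt_integral_of_dominated_loc_of_deriv_le (μ := μ)
    (F' := fun e' x => p * max (e' - φ x) 0 ^ (p - 1))
    (bound := fun x => p * max (e / 2 - φ x) 0 ^ (p - 1)) (Iio_mem_nhds (by linarith : e < e / 2))
    (Eventually.of_forall fun e' => (hcont p (by linarith) e').aestronglyMeasurable)
    (integrable_max_sub_rpow μ hc htend (by linarith) he)
    ((hcont _ (by linarith) e).const_mul p).aestronglyMeasurable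
    (ae_of_all _ fun x e' he' => by
      rw [norm_of_nonneg (by positivity)]
      exact mul_le_mul_of_nonneg_left
        (monotone_max_zero_rpow (by linarith) (by linarith [mem_Iio.1 he'])) (by linarith))
    ((integrable_max_sub_rpow μ hc htend (by linarith) (by linarith)).const_mul p)
    (ae_of_all _ fun x e' _ => by
      simpa [Function.comp_def] using
        (hasDerivAt_max_zero_rpow hp _).comp e' ((hasDerivAt_id e').sub_const (φ x)))
  have h := hderiv.2
  rwa [integral_const_mul] at h

lemma continuousOn_wellIntegral [OpensMeasurableSpace E] [IsFiniteMeasureOnCompacts μ]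
    (hc : Continuous φ) (htend : Tendsto φ (cocompact E) (𝓝 0)) {p : ℝ} (hp : 0 < p) :
    ContinuousOn (wellIntegral μ φ p) (Iio 0) := by
  intro e (he : e < 0)
  refine (continuousAt_of_dominated (bound := fun x => max (e / 2 - φ x) 0 ^ p)
    (Eventually.of_forall fun e' =>
      Continuous.aestronglyMeasurable (by fun_prop (disch := positivity)))
    ?_ (integrable_max_sub_rpow μ hc htend hp (by linarith))
    (ae_of_all _ fun x => by fun_prop (disch := positivity))).continuousWithinAt
  filter_upwards [Iio_mem_nhds (by linarith : e < e / 2)] with e' he'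
  refine ae_of_all _ fun x => ?_
  rw [norm_of_nonneg (by positivity)]
  exact monotone_max_zero_rpow hp.le (by linarith [mem_Iio.1 he'])

lemma contDiffOn_wellIntegral [OpensMeasurableSpace E] [IsFiniteMeasureOnCompacts μ]
    (hc : Continuous φ) (htend : Tendsto φ (cocompact E) (𝓝 0)) {p : ℝ} (hp : 1 < p) :
    ContDiffOn ℝ 1 (wellIntegral μ φ p) (Iio 0) :=
  contDiffOn_one_of_hasDerivAt isOpen_Iio (fun _ he => hasDerivAt_wellIntegral μ hc htend hp he)
    (continuousOn_const.mul (continuousOn_wellIntegral μ hc htend (by linarith)))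

lemma wellIntegral_lt_wellIntegral [OpensMeasurableSpace E] [IsFiniteMeasureOnCompacts μ]
    [μ.IsOpenPosMeasure] (hc : Continuous φ) (htend : Tendsto φ (cocompact E) (𝓝 0)) {p e₁ e₂ : ℝ}
    (hp : 0 < p) (he : e₁ < e₂) (he₂ : e₂ < 0) {x₀ : E} (hx₀ : φ x₀ < e₂) :
    wellIntegral μ φ p e₁ < wellIntegral μ φ p e₂ := by
  have hint := fun e (he : e < 0) => integrable_max_sub_rpow μ hc htend hp he
  rw [← sub_pos, wellIntegral, wellIntegral, ← integral_sub (hint e₂ he₂) (hint e₁ (he.trans he₂))]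
  refine integral_pos_of_integrable_nonneg_nonzero (x := x₀) (by fun_prop (disch := positivity))
    ((hint e₂ he₂).sub (hint e₁ (he.trans he₂)))
    (fun x => sub_nonneg.2 (monotone_max_zero_rpow hp.le (by linarith))) (sub_ne_zero.2 ?_)
  refine (rpow_lt_rpow (le_max_right _ _) ?_ hp).ne'
  rw [max_eq_left (by linarith : 0 ≤ e₂ - φ x₀)]
  exact max_lt (by linarith) (by linarith)

end WellIntegral

section Divergence

variable {E : Type*} [NormedAddCommGroup E] [NormedSpace ℝ E] [FiniteDimensional ℝ E]
  [MeasurableSpace E] [BorelSpace E] (μ : Measure E) [μ.IsAddHaarMeasure] {φ : E → ℝ}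

lemma le_wellIntegral_of_le_neg_div (hc : Continuous φ) (htend : Tendsto φ (cocompact E) (𝓝 0))
    {m p t : ℝ} (hφ : ∀ x, φ x ≤ -(m / (1 + ‖x‖))) (hp : 0 < p) (ht : 0 < t) (htm : t ≤ m / 4) :
    (m / 4) ^ finrank ℝ E * μ.real (ball 0 1) * t ^ (p - finrank ℝ E) ≤
      wellIntegral μ φ p (-t) := by
  set r := m / (4 * t)
  have hr : 1 ≤ r := by rw [le_div_iff₀ (by positivity)]; linarith
  -- on `closedBall 0 r` we have `1 + ‖x‖ ≤ 2 r = m / (2 t)`, so `φ x ≤ -2 t`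
  have hball : ∀ x ∈ closedBall (0 : E) r, φ x ≤ -t - t := fun x hx => by
    have hx : ‖x‖ ≤ r := mem_closedBall_zero_iff.1 hx
    have h2t : 2 * t ≤ m / (1 + ‖x‖) := by
      rw [le_div_iff₀ (by positivity)]
      have : m = 4 * t * r := by simp only [r]; field_simp
      nlinarith
    linarith [hφ x]
  have hvol : t ^ p * μ.real (closedBall 0 r) =
      (m / 4) ^ finrank ℝ E * μ.real (ball 0 1) * t ^ (p - finrank ℝ E) := by
    rw [Measure.addHaar_real_closedBall μ 0 (by linarith), rpow_sub ht, rpow_natCast]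
    simp only [r, div_pow, mul_pow]
    field_simp
  rw [← hvol]
  exact rpow_mul_measureReal_le_wellIntegral μ measurableSet_closedBall
    measure_closedBall_lt_top.ne hp.le ht.le hball
    (integrable_max_sub_rpow μ hc htend hp (by linarith))

lemma tendsto_wellIntegral_nhdsLT_zero (hc : Continuous φ)
    (htend : Tendsto φ (cocompact E) (𝓝 0)) {m p : ℝ} (hm : 0 < m)
    (hφ : ∀ x, φ x ≤ -(m / (1 + ‖x‖))) (hp : 0 < p) (hpE : p < finrank ℝ E) :
    Tendsto (wellIntegral μ φ p) (𝓝[<] 0) atTop := by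
  have hball : 0 < μ.real (ball (0 : E) 1) :=
    ENNReal.toReal_pos (measure_ball_pos μ 0 one_pos).ne' measure_ball_lt_top.ne
  have hlower : Tendsto (fun e : ℝ => (m / 4) ^ finrank ℝ E * μ.real (ball 0 1) *
      (-e) ^ (p - finrank ℝ E)) (𝓝[<] 0) atTop :=
    ((tendsto_rpow_neg_nhdsGT_zero (sub_neg.2 hpE)).comp
      (by simpa using tendsto_neg_nhdsLT (a := (0 : ℝ)))).const_mul_atTop (by positivity)
  refine tendsto_atTop_mono' _ ?_ hlower
  filter_upwards [Ioo_mem_nhdsLT (by linarith : -(m / 4) < 0)] with e he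
  simpa using le_wellIntegral_of_le_neg_div μ hc htend hφ hp (neg_pos.2 he.2) (by linarith [he.1])

end Divergence

lemma le_neg_mX_div {φ : R3 → ℝ} (hneg : ∀ x, φ x ≤ 0) (x : R3) : φ x ≤ -(mX φ / (1 + ‖x‖)) := by
  have hmX : mX φ ≤ (1 + ‖x‖) * -φ x := by
    rw [← abs_of_nonpos (hneg x)]
    exact ciInf_le ⟨0, by rintro _ ⟨y, rfl⟩; positivity⟩ x
  rw [le_neg, div_le_iff₀ (by positivity)]
  linarith

theorem jacobian_diffeomorphism (φ : R3 → ℝ) (hφ : memX φ)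
    (x₀ : R3) (hx₀ : ∀ x, φ x₀ ≤ φ x) :
    ContDiffOn ℝ 1 (aphi φ) (Iio (0 : ℝ)) ∧
    (∀ e < (0 : ℝ),
      HasDerivAt (aphi φ)
        (4 * π * Real.sqrt 2 * ∫ x : R3, (max (e - φ x) 0) ^ ((1 : ℝ) / 2)) e) ∧
    StrictMonoOn (aphi φ) (Ico (φ x₀) 0) ∧
    (aphi φ) '' (Ico (φ x₀) 0) = Ici (0 : ℝ) ∧
    Tendsto (aphi φ) (nhdsWithin 0 (Iio (0 : ℝ))) atTop := by
  obtain ⟨hc, hneg, htend, -, hm⟩ := hφ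
  have hC : 0 < 8 * π * √2 / 3 := by positivity
  have haphi : aphi φ = fun e => 8 * π * √2 / 3 * wellIntegral volume φ (3 / 2) e := rfl
  have hmin : φ x₀ < 0 := (le_neg_mX_div hneg x₀).trans_lt (neg_neg_of_pos (by positivity))
  have hC1 : ContDiffOn ℝ 1 (aphi φ) (Iio 0) := by
    rw [haphi]
    exact (contDiffOn_wellIntegral volume hc htend (by norm_num)).const_smul (8 * π * √2 / 3)
  have hmono : StrictMonoOn (aphi φ) (Ico (φ x₀) 0) := fun e₁ he₁ e₂ he₂ h =>
    mul_lt_mul_of_pos_left (wellIntegral_lt_wellIntegral volume hc htend (by norm_num) h he₂.2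
      (he₁.1.trans_lt h)) hC
  have htop : Tendsto (aphi φ) (𝓝[<] 0) atTop :=
    (tendsto_wellIntegral_nhdsLT_zero volume hc htend hm (le_neg_mX_div hneg) (by norm_num)
      (by simp)).const_mul_atTop hC
  have hzero : aphi φ (φ x₀) = 0 := by
    simp only [haphi, wellIntegral_eq_zero volume (by norm_num : (0 : ℝ) < 3 / 2) hx₀, mul_zero]
  refine ⟨hC1, fun e he => ?_, hmono, ?_, htop⟩
  · rw [haphi]
    refine ((hasDerivAt_wellIntegral volume hc htend (by norm_num : (1 : ℝ) < 3 / 2) he).const_mul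
      (8 * π * √2 / 3)).congr_deriv ?_
    rw [wellIntegral]
    norm_num
    ring
  · rw [image_Ico_eq_Ici_of_tendsto hmin (hC1.continuousOn.mono Ico_subset_Iio_self)
      hmono.monotoneOn htop, hzero]
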